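/- arXiv:1903.12102 — 3 statements merged into one kernel-verified Lean document; each statement's English description precedes it below -/
import Mathlib

section
/- For every real number θ0 with 0 ≤ θ0 < π, the integral ∫_{θ0}^{π} √((1 − cos θ)/(cos θ0 − cos θ)) dθ equals π. In particular this value does not depend on θ0. -/
open Real intervalIntegral

/-!
With `c = cos (θ₀ / 2)`, the half-angle formulas turn the integrand into
`sin (θ / 2) / √(c² - cos² (θ / 2))`, which is the derivative of
`2 arccos (cos (θ / 2) / c)`.
This antiderivative runs from `2 arccos 1 = 0` at `θ₀` to `2 arccos 0 = π` at `π`. The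
singularity at `θ₀` is harmless: a nonnegative derivative of a function continuous on the
closed interval is automatically integrable.
-/

theorem integral_eq_sub_of_hasDerivAt_of_le_of_nonneg {f f' : ℝ → ℝ} {a b : ℝ}
    (hab : a ≤ b) (hcont : ContinuousOn f (Set.Icc a b))
    (hderiv : ∀ x ∈ Set.Ioo a b, HasDerivAt f (f' x) x)
    (hpos : ∀ x ∈ Set.Ioo a b, 0 ≤ f' x) : ∫ x in a..b, f' x = f b - f a :=
  integral_eq_sub_of_hasDerivAt_of_le hab hcont hderiv <|
    (intervalIntegrable_iff_integrableOn_Ioc_of_le hab).2 <|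
      integrableOn_deriv_of_nonneg hcont hderiv hpos

theorem Real.sqrt_one_sub_cos_div_cos_sub_cos {θ₀ θ : ℝ} (hθ : 0 ≤ sin (θ / 2)) :
    √((1 - cos θ) / (cos θ₀ - cos θ)) =
      sin (θ / 2) / √(cos (θ₀ / 2) ^ 2 - cos (θ / 2) ^ 2) := by
  have hcos (x : ℝ) : cos x = 2 * cos (x / 2) ^ 2 - 1 := by
    rw [← cos_two_mul, mul_div_cancel₀ x two_ne_zero]
  have hfrac : (1 - cos θ) / (cos θ₀ - cos θ) =
      sin (θ / 2) ^ 2 / (cos (θ₀ / 2) ^ 2 - cos (θ / 2) ^ 2) := by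
    rw [hcos θ, hcos θ₀, sin_sq]
    rw [show 1 - (2 * cos (θ / 2) ^ 2 - 1) = 2 * (1 - cos (θ / 2) ^ 2) by ring,
      show 2 * cos (θ₀ / 2) ^ 2 - 1 - (2 * cos (θ / 2) ^ 2 - 1)
        = 2 * (cos (θ₀ / 2) ^ 2 - cos (θ / 2) ^ 2) by ring, mul_div_mul_left _ _ two_ne_zero]
  rw [hfrac, sqrt_div (sq_nonneg _), sqrt_sq hθ]

theorem Real.hasDerivAt_two_mul_arccos_cos_half_div {c θ : ℝ} (hc : 0 < c)
    (hθ : cos (θ / 2) ^ 2 < c ^ 2) :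
    HasDerivAt (fun t ↦ 2 * arccos (cos (t / 2) / c))
      (sin (θ / 2) / √(c ^ 2 - cos (θ / 2) ^ 2)) θ := by
  have hx : |cos (θ / 2) / c| < 1 := by
    rw [abs_div, abs_of_pos hc, div_lt_one hc]
    exact abs_lt_of_sq_lt_sq hθ hc.le
  have hinner : HasDerivAt (fun t ↦ cos (t / 2) / c) (-sin (θ / 2) * (1 / 2) / c) θ := by
    simpa using (((hasDerivAt_id θ).div_const 2).cos).div_const c
  have harccos := (hasDerivAt_arccos (abs_lt.1 hx).1.ne' (abs_lt.1 hx).2.ne).comp θ hinner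
  refine (harccos.const_mul 2).congr_deriv ?_
  have hsqrt : √(c ^ 2 - cos (θ / 2) ^ 2) = c * √(1 - (cos (θ / 2) / c) ^ 2) := by
    rw [show c ^ 2 - cos (θ / 2) ^ 2 = c ^ 2 * (1 - (cos (θ / 2) / c) ^ 2) by field_simp,
      sqrt_mul (sq_nonneg c), sqrt_sq hc.le]
  rw [hsqrt]
  field_simp

theorem tautochrone_integral (θ0 : ℝ) (h0 : 0 ≤ θ0) (h1 : θ0 < Real.pi) :
    ∫ θ in θ0..Real.pi,
      Real.sqrt ((1 - Real.cos θ) / (Real.cos θ0 - Real.cos θ)) = Real.pi := by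
  set c := cos (θ0 / 2)
  have hc : 0 < c := cos_pos_of_mem_Ioo ⟨by linarith [pi_pos], by linarith⟩
  have hderiv : ∀ θ ∈ Set.Ioo θ0 π, HasDerivAt (fun t ↦ 2 * arccos (cos (t / 2) / c))
      (√((1 - cos θ) / (cos θ0 - cos θ))) θ := by
    rintro θ ⟨hθ0, hθπ⟩
    have hcos_pos : 0 < cos (θ / 2) := cos_pos_of_mem_Ioo ⟨by linarith [pi_pos], by linarith⟩
    have hcos_lt : cos (θ / 2) < c :=
      cos_lt_cos_of_nonneg_of_le_pi (by linarith) (by linarith) (by linarith)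
    have hsin : 0 ≤ sin (θ / 2) := sin_nonneg_of_nonneg_of_le_pi (by linarith) (by linarith)
    rw [sqrt_one_sub_cos_div_cos_sub_cos hsin]
    exact hasDerivAt_two_mul_arccos_cos_half_div hc
      (pow_lt_pow_left₀ hcos_lt hcos_pos.le two_ne_zero)
  rw [integral_eq_sub_of_hasDerivAt_of_le_of_nonneg h1.le (by fun_prop) hderiv
    (fun _ _ ↦ sqrt_nonneg _), cos_pi_div_two, zero_div, arccos_zero, div_self hc.ne', arccos_one]
  ring
end

section
/- Let r > 0 and g > 0 be real numbers. For every real number θ0 with 0 ≤ θ0 < π, the integral ∫_{θ0}^{π} ( r·√(2(1 − cos θ)) / √(2 g r (cos θ0 − cos θ)) ) dθ equals π·√(r/g). -/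
open Real intervalIntegral

lemma taut_sin_le_two_mul {a b : ℝ} (ha : 0 ≤ a) (hab : a ≤ b) (hb : b ≤ π/2) :
    Real.sin b ≤ 2 * Real.sin ((a+b)/2) := by
  have hpi := Real.pi_pos
  have h1 : Real.sin ((b-a)/2) ≤ Real.sin ((a+b)/2) :=
    Real.sin_le_sin_of_le_of_le_pi_div_two (by linarith) (by linarith) (by linarith)
  have hb' : Real.sin b = Real.sin ((a+b)/2 + (b-a)/2) := by congr 1; ring
  rw [hb', Real.sin_add]
  have c1 : Real.cos ((b-a)/2) ≤ 1 := Real.cos_le_one _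
  have c2 : Real.cos ((a+b)/2) ≤ 1 := Real.cos_le_one _
  have s1 : 0 ≤ Real.sin ((a+b)/2) :=
    Real.sin_nonneg_of_nonneg_of_le_pi (by linarith) (by linarith)
  have s2 : 0 ≤ Real.sin ((b-a)/2) :=
    Real.sin_nonneg_of_nonneg_of_le_pi (by linarith) (by linarith)
  nlinarith

lemma taut_cos_sub_cos_ge {a b : ℝ} (ha : 0 ≤ a) (hab : a ≤ b) (hb : b ≤ π/2) :
    Real.sin b * (b - a) / π ≤ Real.cos a - Real.cos b := by
  have hpi := Real.pi_pos
  have h2 : 2/π * ((b-a)/2) ≤ Real.sin ((b-a)/2) :=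
    Real.mul_le_sin (by linarith) (by linarith)
  have h3 := taut_sin_le_two_mul ha hab hb
  have key : Real.cos a - Real.cos b = 2 * Real.sin ((a+b)/2) * Real.sin ((b-a)/2) := by
    rw [Real.cos_sub_cos, show (a-b)/2 = -((b-a)/2) by ring, Real.sin_neg]; ring
  have s1 : 0 ≤ Real.sin ((a+b)/2) :=
    Real.sin_nonneg_of_nonneg_of_le_pi (by linarith) (by linarith)
  have sb : 0 ≤ Real.sin b := Real.sin_nonneg_of_nonneg_of_le_pi (by linarith) (by linarith)
  have h2' : b - a ≤ π * Real.sin ((b-a)/2) := by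
    rw [show 2/π * ((b-a)/2) = (b-a)/π by ring, div_le_iff₀ hpi] at h2
    linarith
  rw [key, div_le_iff₀ hpi]
  nlinarith [mul_le_mul_of_nonneg_left h2' s1, mul_le_mul_of_nonneg_right h3 (sub_nonneg.2 hab)]

set_option maxHeartbeats 1000000 in
theorem huygens_tautochrone (r g : ℝ) (hr : 0 < r) (hg : 0 < g)
    (θ0 : ℝ) (h0 : 0 ≤ θ0) (h1 : θ0 < Real.pi) :
    ∫ θ in θ0..Real.pi,
      r * Real.sqrt (2 * (1 - Real.cos θ)) /
        Real.sqrt (2 * g * r * (Real.cos θ0 - Real.cos θ))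
      = Real.pi * Real.sqrt (r / g) := by
  have hpi := Real.pi_pos
  obtain ⟨F', hF'⟩ : ∃ F' : ℝ → ℝ, F' = fun θ =>
      r * Real.sqrt (2 * (1 - Real.cos θ)) /
        Real.sqrt (2 * g * r * (Real.cos θ0 - Real.cos θ)) := ⟨_, rfl⟩
  obtain ⟨c, hcdef⟩ : ∃ c : ℝ, c = Real.cos (θ0 / 2) := ⟨_, rfl⟩
  obtain ⟨k, hkdef⟩ : ∃ k : ℝ, k = Real.sqrt (r / g) := ⟨_, rfl⟩
  have hc : 0 < c := hcdef ▸ Real.cos_pos_of_mem_Ioo ⟨by linarith, by linarith⟩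
  have hk : 0 < k := hkdef ▸ Real.sqrt_pos.2 (div_pos hr hg)
  obtain ⟨f, hfdef⟩ : ∃ f : ℝ → ℝ, f = fun θ =>
      -2 * k * Real.arcsin (Real.cos (θ / 2) / c) := ⟨_, rfl⟩
  -- basic pointwise facts on (θ0, π]
  have hfacts : ∀ x ∈ Set.Ioc θ0 Real.pi,
      0 < Real.sin (x / 2) ∧ 0 ≤ Real.cos (x / 2) ∧ Real.cos (x / 2) < c := by
    intro x hx
    refine ⟨Real.sin_pos_of_pos_of_lt_pi (by linarith [hx.1]) (by linarith [hx.2]), ?_, ?_⟩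
    · exact Real.cos_nonneg_of_mem_Icc ⟨by linarith [hx.1], by linarith [hx.2]⟩
    · rw [hcdef]
      exact Real.cos_lt_cos_of_nonneg_of_le_pi (by linarith) (by linarith [hx.2])
        (by linarith [hx.1])
  have hden : ∀ x ∈ Set.Ioc θ0 Real.pi, 0 < c ^ 2 - Real.cos (x / 2) ^ 2 := by
    intro x hx
    obtain ⟨_, hu0, huc⟩ := hfacts x hx
    nlinarith
  -- rewrite of the integrand
  have hIeq : ∀ x ∈ Set.Ioc θ0 Real.pi,
      F' x = k * Real.sin (x / 2) / Real.sqrt (c ^ 2 - Real.cos (x / 2) ^ 2) := by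
    intro x hx
    obtain ⟨hs, hu0, huc⟩ := hfacts x hx
    have hcosx : Real.cos x = 2 * Real.cos (x / 2) ^ 2 - 1 := by
      have := Real.cos_sq (x / 2)
      rw [show 2 * (x / 2) = x by ring] at this
      linarith
    have hcosθ0 : Real.cos θ0 = 2 * c ^ 2 - 1 := by
      have := Real.cos_sq (θ0 / 2)
      rw [show 2 * (θ0 / 2) = θ0 by ring] at this
      rw [hcdef]; linarith
    have hsin2 : Real.sin (x / 2) ^ 2 = 1 - Real.cos (x / 2) ^ 2 := Real.sin_sq _
    have hnum : Real.sqrt (2 * (1 - Real.cos x)) = 2 * Real.sin (x / 2) := by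
      rw [show 2 * (1 - Real.cos x) = (2 * Real.sin (x / 2)) ^ 2 by nlinarith]
      exact Real.sqrt_sq (by linarith)
    have hden2 : Real.sqrt (2 * g * r * (Real.cos θ0 - Real.cos x))
        = 2 * Real.sqrt (g * r) * Real.sqrt (c ^ 2 - Real.cos (x / 2) ^ 2) := by
      rw [show 2 * g * r * (Real.cos θ0 - Real.cos x)
          = (2 : ℝ) ^ 2 * (g * r) * (c ^ 2 - Real.cos (x / 2) ^ 2) by
        rw [hcosx, hcosθ0]; ring]
      rw [Real.sqrt_mul (by positivity), Real.sqrt_mul (by norm_num : (0:ℝ) ≤ (2:ℝ)^2),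
        Real.sqrt_sq (by norm_num : (0:ℝ) ≤ 2)]
    have hgr : (0 : ℝ) < Real.sqrt (g * r) := Real.sqrt_pos.2 (by positivity)
    have hrk : Real.sqrt (g * r) * k = r := by
      rw [hkdef, ← Real.sqrt_mul (by positivity)]
      rw [show g * r * (r / g) = r ^ 2 by field_simp]
      exact Real.sqrt_sq hr.le
    have hD : 0 < Real.sqrt (c ^ 2 - Real.cos (x / 2) ^ 2) := Real.sqrt_pos.2 (hden x hx)
    rw [hF']
    simp only
    rw [hnum, hden2, div_eq_div_iff (by positivity) hD.ne']
    linear_combination (-2 * Real.sin (x / 2) * Real.sqrt (c ^ 2 - Real.cos (x / 2) ^ 2)) * hrk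
  -- continuity of the antiderivative
  have hcont : ContinuousOn f (Set.Icc θ0 Real.pi) := by
    rw [hfdef]
    apply Continuous.continuousOn
    exact continuous_const.mul (Real.continuous_arcsin.comp
      ((Real.continuous_cos.comp (continuous_id.div_const 2)).div_const c))
  -- derivative
  have hderiv : ∀ x ∈ Set.Ioo θ0 Real.pi, HasDerivWithinAt f (F' x) (Set.Ioi x) x := by
    intro x hx
    have hx' : x ∈ Set.Ioc θ0 Real.pi := ⟨hx.1, hx.2.le⟩
    obtain ⟨hs, hu0, huc⟩ := hfacts x hx'
    have hD : 0 < c ^ 2 - Real.cos (x / 2) ^ 2 := hden x hx'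
    have hDpos : (0:ℝ) < Real.sqrt (c ^ 2 - Real.cos (x / 2) ^ 2) := Real.sqrt_pos.2 hD
    have hne1 : Real.cos (x / 2) / c ≠ -1 := by
      have : 0 ≤ Real.cos (x / 2) / c := div_nonneg hu0 hc.le
      intro h; rw [h] at this; linarith
    have hne2 : Real.cos (x / 2) / c ≠ 1 := ne_of_lt ((div_lt_one hc).2 huc)
    have hinner : HasDerivAt (fun θ : ℝ => Real.cos (θ / 2) / c)
        (-Real.sin (x / 2) * (1 / 2) / c) x := by
      have h2 : HasDerivAt (fun θ : ℝ => θ / 2) (1 / 2) x := (hasDerivAt_id x).div_const 2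
      exact h2.cos.div_const c
    have harc := (Real.hasDerivAt_arcsin hne1 hne2).comp x hinner
    have hfd : HasDerivAt f (-2 * k *
        (1 / Real.sqrt (1 - (Real.cos (x / 2) / c) ^ 2) *
          (-Real.sin (x / 2) * (1 / 2) / c))) x := by
      rw [hfdef]
      exact harc.const_mul (-2 * k)
    have hsq : Real.sqrt (1 - (Real.cos (x / 2) / c) ^ 2)
        = Real.sqrt (c ^ 2 - Real.cos (x / 2) ^ 2) / c := by
      rw [show 1 - (Real.cos (x / 2) / c) ^ 2 = (c ^ 2 - Real.cos (x / 2) ^ 2) / c ^ 2 by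
        field_simp, Real.sqrt_div hD.le, Real.sqrt_sq hc.le]
    have hval : -2 * k *
        (1 / Real.sqrt (1 - (Real.cos (x / 2) / c) ^ 2) *
          (-Real.sin (x / 2) * (1 / 2) / c)) = F' x := by
      rw [hIeq x hx', hsq]
      rw [one_div_div]
      field_simp
    rw [← hval]
    exact hfd.hasDerivWithinAt
  -- integrability
  obtain ⟨M, hMdef⟩ : ∃ M : ℝ, M = k * Real.sqrt (2 * Real.pi / c) := ⟨_, rfl⟩
  have hM : 0 < M := hMdef ▸ mul_pos hk (Real.sqrt_pos.2 (by positivity))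
  have hM2 : M ^ 2 = k ^ 2 * (2 * Real.pi / c) := by
    have h2pc : Real.sqrt (2 * Real.pi / c) ^ 2 = 2 * Real.pi / c :=
      Real.sq_sqrt (by positivity)
    rw [hMdef, mul_pow, h2pc]
  have hbound : ∀ x ∈ Set.Ioc θ0 Real.pi,
      ‖F' x‖ ≤ ‖M * (x - θ0) ^ (-(1/2) : ℝ)‖ := by
    intro x hx
    obtain ⟨hs, hu0, huc⟩ := hfacts x hx
    have ht : 0 < x - θ0 := by linarith [hx.1]
    have hD : 0 < c ^ 2 - Real.cos (x / 2) ^ 2 := hden x hx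
    have hDpos : (0:ℝ) < Real.sqrt (c ^ 2 - Real.cos (x / 2) ^ 2) := Real.sqrt_pos.2 hD
    have hrpow : (x - θ0) ^ (-(1/2) : ℝ) = (Real.sqrt (x - θ0))⁻¹ := by
      rw [Real.rpow_neg ht.le, Real.sqrt_eq_rpow]
    have hkey : Real.sin (x / 2) * (x - θ0)
        ≤ 2 * Real.pi / c * (c ^ 2 - Real.cos (x / 2) ^ 2) := by
      have hcc := taut_cos_sub_cos_ge (a := θ0 / 2) (b := x / 2)
        (by linarith) (by linarith [hx.1]) (by linarith [hx.2])
      rw [div_le_iff₀ hpi] at hcc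
      rw [← hcdef] at hcc
      have h7 : (c - Real.cos (x / 2)) * c ≤ c ^ 2 - Real.cos (x / 2) ^ 2 := by nlinarith
      have h8 : 0 ≤ c - Real.cos (x / 2) := by linarith
      rw [div_mul_eq_mul_div, le_div_iff₀ hc]
      nlinarith [mul_le_mul_of_nonneg_right hcc hc.le,
        mul_le_mul_of_nonneg_left h7 (by positivity : (0:ℝ) ≤ 2 * Real.pi)]
    have hFx := hIeq x hx
    have hF'nonneg : 0 ≤ F' x := by rw [hFx]; positivity
    rw [Real.norm_of_nonneg hF'nonneg, hrpow,
      Real.norm_of_nonneg (by positivity : (0:ℝ) ≤ M * (Real.sqrt (x - θ0))⁻¹), hFx]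
    rw [← div_eq_mul_inv, div_le_div_iff₀ hDpos (Real.sqrt_pos.2 ht)]
    have lhs_eq : k * Real.sin (x / 2) * Real.sqrt (x - θ0)
        = Real.sqrt ((k * Real.sin (x / 2)) ^ 2 * (x - θ0)) := by
      rw [Real.sqrt_mul (sq_nonneg _), Real.sqrt_sq (by positivity)]
    have rhs_eq : M * Real.sqrt (c ^ 2 - Real.cos (x / 2) ^ 2)
        = Real.sqrt (M ^ 2 * (c ^ 2 - Real.cos (x / 2) ^ 2)) := by
      rw [Real.sqrt_mul (sq_nonneg _), Real.sqrt_sq hM.le]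
    rw [lhs_eq, rhs_eq]
    apply Real.sqrt_le_sqrt
    rw [hM2]
    have hsle : Real.sin (x / 2) ≤ 1 := Real.sin_le_one _
    have hs2 : Real.sin (x / 2) ^ 2 ≤ Real.sin (x / 2) := by
      rw [sq]; exact mul_le_of_le_one_left hs.le hsle
    have hst : Real.sin (x / 2) ^ 2 * (x - θ0) ≤ Real.sin (x / 2) * (x - θ0) :=
      mul_le_mul_of_nonneg_right hs2 ht.le
    calc (k * Real.sin (x / 2)) ^ 2 * (x - θ0)
        = k ^ 2 * (Real.sin (x / 2) ^ 2 * (x - θ0)) := by ring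
      _ ≤ k ^ 2 * (2 * Real.pi / c * (c ^ 2 - Real.cos (x / 2) ^ 2)) :=
          mul_le_mul_of_nonneg_left (hst.trans hkey) (sq_nonneg k)
      _ = k ^ 2 * (2 * Real.pi / c) * (c ^ 2 - Real.cos (x / 2) ^ 2) := by ring
  have hmeas : MeasureTheory.AEStronglyMeasurable F'
      (MeasureTheory.volume.restrict (Set.uIoc θ0 Real.pi)) := by
    rw [hF']
    apply Measurable.aestronglyMeasurable
    apply Measurable.div
    · exact (continuous_const.mul (Real.continuous_sqrt.comp (by continuity))).measurable
    · exact (Real.continuous_sqrt.comp (by continuity)).measurable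
  have hint : IntervalIntegrable F' MeasureTheory.volume θ0 Real.pi := by
    have base : IntervalIntegrable (fun x : ℝ => x ^ (-(1/2) : ℝ)) MeasureTheory.volume
        0 (Real.pi - θ0) := intervalIntegrable_rpow' (by norm_num)
    have base2 := base.comp_sub_right θ0
    rw [zero_add, sub_add_cancel] at base2
    have base3 := base2.const_mul M
    apply base3.mono_fun hmeas
    rw [Set.uIoc_of_le h1.le]
    exact (MeasureTheory.ae_restrict_iff' measurableSet_Ioc).2
      (Filter.Eventually.of_forall hbound)
  -- conclude
  rw [← hF', integral_eq_sub_of_hasDeriv_right_of_le h1.le hcont hderiv hint]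
  have fπ : f Real.pi = 0 := by
    rw [hfdef]
    simp [Real.cos_pi_div_two]
  have fθ0 : f θ0 = -(k * Real.pi) := by
    rw [hfdef]
    simp only
    rw [← hcdef, div_self hc.ne', Real.arcsin_one]
    ring
  rw [fπ, fθ0, hkdef]
  ring
end

section
/- For every real number θ0 with 0 ≤ θ0 < π, the integral ∫_{θ0}^{π} ( sin(θ/2) / √(cos θ0 − cos θ) ) dθ equals π/√2. -/
/-!
With `c = cos (θ0 / 2)` one has `cos θ0 - cos θ = 2 (c² - cos² (θ / 2))`, so the substitution
`u = cos (θ / 2)` turns the integral into `√2 ∫₀^c du / √(c² - u²)`: the integrand is the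
derivative of `-√2 · arcsin (cos (θ / 2) / c)`, which drops by `√2 · π / 2` from `θ0` to `π`.
-/

open Real intervalIntegral Set

lemma cos_sub_cos_eq_two_mul_cos_half_sq_sub (a x : ℝ) :
    cos a - cos x = 2 * (cos (a / 2) ^ 2 - cos (x / 2) ^ 2) := by
  rw [cos_sq, cos_sq, mul_div_cancel₀ a two_ne_zero, mul_div_cancel₀ x two_ne_zero]
  ring

lemma hasDerivAt_arcsin_div {c u : ℝ} (hu : |u| < c) :
    HasDerivAt (fun y => arcsin (y / c)) (1 / √(c ^ 2 - u ^ 2)) u := by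
  have hc : 0 < c := (abs_nonneg u).trans_lt hu
  obtain ⟨hlo, hhi⟩ := abs_lt.1 hu
  have hsqrt : √(1 - (u / c) ^ 2) = √(c ^ 2 - u ^ 2) / c := by
    rw [← sqrt_sq hc.le, ← sqrt_div' _ (sq_nonneg c), sqrt_sq hc.le]
    congr 1
    field_simp
  have h := (hasDerivAt_arcsin (x := u / c) (by
    rw [Ne, div_eq_iff hc.ne']; linarith) (by rw [Ne, div_eq_iff hc.ne']; linarith)).comp u
    ((hasDerivAt_id u).div_const c)
  refine h.congr_deriv ?_
  rw [hsqrt]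
  field_simp

lemma hasDerivAt_neg_sqrt_two_mul_arcsin_cos_half_div {c x : ℝ} (hx : |cos (x / 2)| < c) :
    HasDerivAt (fun θ => -(√2 * arcsin (cos (θ / 2) / c)))
      (sin (x / 2) / √(2 * (c ^ 2 - cos (x / 2) ^ 2))) x := by
  have h := (((hasDerivAt_arcsin_div hx).comp x
    ((hasDerivAt_cos (x / 2)).comp x ((hasDerivAt_id x).div_const 2))).const_mul √2).neg
  refine h.congr_deriv ?_
  rw [sqrt_mul zero_le_two]
  have : √2 ≠ 0 := by positivity
  field_simp
  rw [sq_sqrt zero_le_two]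

theorem tautochrone_key_integral (θ0 : ℝ) (h0 : 0 ≤ θ0) (h1 : θ0 < Real.pi) :
    ∫ θ in θ0..Real.pi,
      Real.sin (θ / 2) / Real.sqrt (Real.cos θ0 - Real.cos θ)
      = Real.pi / Real.sqrt 2 := by
  set c := cos (θ0 / 2)
  have hc : 0 < c := cos_pos_of_mem_Ioo ⟨by linarith [pi_pos], by linarith⟩
  set F : ℝ → ℝ := fun θ => -(√2 * arcsin (cos (θ / 2) / c))
  have hderiv : ∀ x ∈ Ioo θ0 π, HasDerivAt F (sin (x / 2) / √(cos θ0 - cos x)) x := by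
    rintro x ⟨hθ0x, hxπ⟩
    rw [cos_sub_cos_eq_two_mul_cos_half_sq_sub]
    refine hasDerivAt_neg_sqrt_two_mul_arcsin_cos_half_div (abs_lt.2 ⟨?_, ?_⟩)
    · linarith [cos_nonneg_of_mem_Icc (x := x / 2) ⟨by linarith, by linarith⟩]
    · exact cos_lt_cos_of_nonneg_of_le_pi (by linarith) (by linarith) (by linarith)
  have hnonneg : ∀ x ∈ Ioo θ0 π, 0 ≤ sin (x / 2) / √(cos θ0 - cos x) := fun x hx =>
    div_nonneg (sin_nonneg_of_nonneg_of_le_pi (by linarith [hx.1]) (by linarith [hx.2]))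
      (sqrt_nonneg _)
  have hcont : ContinuousOn F (Icc θ0 π) := by fun_prop
  -- The integrand blows up at θ0; integrability comes for free as it is a nonnegative derivative.
  rw [integral_eq_sub_of_hasDerivAt_of_le h1.le hcont hderiv
    ((intervalIntegrable_iff_integrableOn_Ioc_of_le h1.le).2
      (integrableOn_deriv_of_nonneg hcont hderiv hnonneg))]
  simp only [F, c, cos_pi_div_two, zero_div, arcsin_zero, div_self hc.ne', arcsin_one]
  have : √2 ≠ 0 := by positivity
  field_simp
  rw [sq_sqrt zero_le_two]
  ring
end
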